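/- Let Y, Y' be square-integrable random variables, X a random vector, Z a random variable, Ŷ_{X,Z} = E[Y' | X, Z] and Ŷ_X = E[Y' | X]. If Cov(Ŷ_{X,Z}, Y | X) ≤ 0 almost surely and E[Var(Ŷ_{X,Z} | X)] > 0, then E[(Ŷ_X − Y)²] < E[(Ŷ_{X,Z} − Y)²], i.e., the simple estimator strictly outperforms the complex estimator in mean squared error on the true label Y. -/

import Mathlib

/-!
Write `Ŷ_{X,Z} = E[Y' | X, Z]` and `Ŷ_X = E[Y' | X]`. Expanding the squares, the two mean squared
errors differ by `(E[Ŷ_{X,Z}²] - E[Ŷ_X²]) - 2 (E[Ŷ_{X,Z} Y] - E[Ŷ_X Y])`. By the tower property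
`E[Ŷ_{X,Z} | X] = Ŷ_X`, so the first bracket is the expected conditional variance of `Ŷ_{X,Z}`
given `X`, which is positive, and, pulling the `X`-measurable `Ŷ_X` out of `E[· | X]`, the second
is the expected conditional covariance of `Ŷ_{X,Z}` and `Y` given `X`, which is nonpositive.
-/

open MeasureTheory ProbabilityTheory

section

variable {Ω : Type*} {m m0 : MeasurableSpace Ω} {μ : Measure Ω} {f g : Ω → ℝ}

lemma integral_sub_sq_of_memLp_two (hf : MemLp f 2 μ) (hg : MemLp g 2 μ) :
    ∫ ω, (f ω - g ω) ^ 2 ∂μ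
      = ∫ ω, f ω ^ 2 ∂μ - 2 * ∫ ω, f ω * g ω ∂μ + ∫ ω, g ω ^ 2 ∂μ := by
  have hfg : Integrable (fun ω => 2 * (f ω * g ω)) μ := (hf.integrable_mul hg).const_mul 2
  simp_rw [sub_sq, mul_assoc]
  rw [integral_add ?_ hg.integrable_sq, integral_sub hf.integrable_sq hfg, integral_const_mul]
  exact hf.integrable_sq.sub hfg

lemma integral_mul_condExp_of_stronglyMeasurable (hm : m ≤ m0) [SigmaFinite (μ.trim hm)]
    (hf : StronglyMeasurable[m] f) (hfg : Integrable (f * g) μ) (hg : Integrable g μ) :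
    ∫ ω, f ω * (μ[g|m]) ω ∂μ = ∫ ω, f ω * g ω ∂μ := by
  calc ∫ ω, f ω * (μ[g|m]) ω ∂μ = ∫ ω, (μ[f * g|m]) ω ∂μ :=
        integral_congr_ae (condExp_mul_of_stronglyMeasurable_left hf hfg hg).symm
    _ = ∫ ω, f ω * g ω ∂μ := integral_condExp hm

variable [IsFiniteMeasure μ]

lemma integral_condExp_sq_sub_sq_condExp (hm : m ≤ m0) (hf : MemLp f 2 μ) :
    ∫ ω, ((μ[fun ω' => f ω' ^ 2|m]) ω - ((μ[f|m]) ω) ^ 2) ∂μ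
      = ∫ ω, f ω ^ 2 ∂μ - ∫ ω, ((μ[f|m]) ω) ^ 2 ∂μ := by
  rw [integral_sub integrable_condExp (hf.condExp one_le_two).integrable_sq, integral_condExp hm]

lemma integral_condExp_mul_sub_mul_condExp (hm : m ≤ m0) (hf : MemLp f 2 μ) (hg : MemLp g 2 μ) :
    ∫ ω, ((μ[fun ω' => f ω' * g ω'|m]) ω - (μ[f|m]) ω * (μ[g|m]) ω) ∂μ
      = ∫ ω, f ω * g ω ∂μ - ∫ ω, (μ[f|m]) ω * g ω ∂μ := by
  have hf' : MemLp (μ[f|m]) 2 μ := hf.condExp one_le_two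
  have hfg' : Integrable (fun ω => (μ[f|m]) ω * (μ[g|m]) ω) μ :=
    hf'.integrable_mul (hg.condExp one_le_two)
  rw [integral_sub integrable_condExp hfg',
    integral_condExp hm, integral_mul_condExp_of_stronglyMeasurable hm stronglyMeasurable_condExp
      (hf'.integrable_mul hg) (hg.integrable one_le_two)]

end

/-- Under the nonpositive conditional covariance condition,
if additionally `E[Var(Ŷ_{X,Z} | X)] > 0`, then the simple estimator strictly
outperforms the complex estimator in MSE on the true label `Y`. -/
theorem simple_beats_complex_strict
    {Ω : Type*} {m0 : MeasurableSpace Ω} (μ : Measure Ω) [IsProbabilityMeasure μ]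
    (mX mXZ : MeasurableSpace Ω) (h1 : mX ≤ mXZ) (h2 : mXZ ≤ m0)
    (Y Y' : Ω → ℝ) (hY : MemLp Y 2 μ) (hY' : MemLp Y' 2 μ)
    (hcov : ∀ᵐ ω ∂μ,
      (μ[fun ω' => (μ[Y'|mXZ]) ω' * Y ω' | mX]) ω
        - (μ[(μ[Y'|mXZ]) | mX]) ω * (μ[Y|mX]) ω ≤ 0)
    (hvar : 0 < ∫ ω, ((μ[fun ω' => ((μ[Y'|mXZ]) ω') ^ 2 | mX]) ω
        - ((μ[(μ[Y'|mXZ]) | mX]) ω) ^ 2) ∂μ) :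
    ∫ ω, ((μ[Y'|mX]) ω - Y ω) ^ 2 ∂μ < ∫ ω, ((μ[Y'|mXZ]) ω - Y ω) ^ 2 ∂μ := by
  have hmX : mX ≤ m0 := h1.trans h2
  have hA : MemLp (μ[Y'|mXZ]) 2 μ := hY'.condExp one_le_two
  have hB : MemLp (μ[Y'|mX]) 2 μ := hY'.condExp one_le_two
  have tower : μ[μ[Y'|mXZ]|mX] =ᵐ[μ] μ[Y'|mX] := condExp_condExp_of_le h1 h2
  have hsq : ∫ ω, (μ[Y'|mX]) ω ^ 2 ∂μ < ∫ ω, (μ[Y'|mXZ]) ω ^ 2 ∂μ := by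
    have hsq_tower : ∫ ω, (μ[μ[Y'|mXZ]|mX]) ω ^ 2 ∂μ = ∫ ω, (μ[Y'|mX]) ω ^ 2 ∂μ :=
      integral_congr_ae (tower.pow_const 2)
    rw [integral_condExp_sq_sub_sq_condExp hmX hA, hsq_tower] at hvar
    linarith
  have hmul : ∫ ω, (μ[Y'|mXZ]) ω * Y ω ∂μ ≤ ∫ ω, (μ[Y'|mX]) ω * Y ω ∂μ := by
    have hle := integral_nonpos_of_ae hcov
    have hmul_tower :
        ∫ ω, (μ[μ[Y'|mXZ]|mX]) ω * Y ω ∂μ = ∫ ω, (μ[Y'|mX]) ω * Y ω ∂μ :=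
      integral_congr_ae (tower.mul_right (f₃ := Y))
    rw [integral_condExp_mul_sub_mul_condExp hmX hA hY, hmul_tower] at hle
    linarith
  rw [integral_sub_sq_of_memLp_two hB hY, integral_sub_sq_of_memLp_two hA hY]
  linarith
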